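/- arXiv:1911.09867 — 11 statements merged into one kernel-verified Lean document; each statement's English description precedes it below -/
import Mathlib

section
/- Let q be a prime power and h, k integers with 2 ≤ h ≤ k. Let D = {(x_1,...,x_k) ∈ GF(q)^k \ {0} : x_1 ⋯ x_h (x_1 + ⋯ + x_h) = 0}. Then the cardinality of D equals q^{k-h-1}(q^{h+1} - (q-1)^{h+1} + (-1)^h (q-1)) - 1. -/
/-!
Write `x = (y, z)` with `y ∈ F^h`. The product `(∏ yᵢ) (∑ yᵢ)` is nonzero exactly when `y` has
all coordinates nonzero and nonzero sum, so `|D| + 1 = q^k - q^(k-h) (#{y ∈ (Fˣ)^h | ∑ y ≠ 0})`.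
The number `Nₙ` of `y ∈ (Fˣ)^n` with `∑ y = 0` satisfies `N_{n+1} = (q-1)^n - Nₙ`: the last
coordinate of such a vector is minus the sum of the others, and is nonzero iff that sum is.
Hence `q Nₙ = (q-1)^n + (-1)^n (q-1)`.
-/

open Finset Fintype

lemma Fin.filter_val_lt_eq_map_castAddEmb (h m : ℕ) :
    ({i : Fin (h + m) | (i : ℕ) < h} : Finset _) = univ.map (Fin.castAddEmb m) := by
  ext i
  simp only [mem_filter, mem_univ, true_and, mem_map, Fin.coe_castAddEmb]
  exact ⟨fun hi => ⟨⟨i, hi⟩, rfl⟩, by rintro ⟨j, rfl⟩; exact j.2⟩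

lemma card_filter_comp_castAdd {α : Type*} [Fintype α] (h m : ℕ)
    (p : (Fin h → α) → Prop) [DecidablePred p] :
    #{x : Fin (h + m) → α | p fun j => x (Fin.castAdd m j)} = #{y | p y} * card α ^ m := by
  calc _ = #(({y | p y} : Finset (Fin h → α)) ×ˢ (univ : Finset (Fin m → α))) :=
        card_equiv (Fin.appendEquiv h m).symm (by simp)
    _ = _ := by simp [card_product]

section

variable {F : Type*} [Field F] [Fintype F] [DecidableEq F]

lemma card_sum_eq_zero_add_card_sum_ne_zero (ι : Type*) [Fintype ι] [DecidableEq ι] :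
    #{y ∈ piFinset fun _ : ι => ({0}ᶜ : Finset F) | ∑ i, y i = 0} +
      #{y ∈ piFinset fun _ : ι => ({0}ᶜ : Finset F) | ∑ i, y i ≠ 0} = (card F - 1) ^ card ι := by
  rw [card_filter_add_card_filter_not]
  simp [card_compl]

lemma card_sum_eq_zero_succ (n : ℕ) :
    #{y ∈ piFinset fun _ : Fin (n + 1) => ({0}ᶜ : Finset F) | ∑ i, y i = 0} =
      #{y ∈ piFinset fun _ : Fin n => ({0}ᶜ : Finset F) | ∑ i, y i ≠ 0} := by
  refine card_nbij' Fin.tail (fun y => Fin.cons (-∑ i, y i) y) ?_ ?_ ?_ ?_ <;>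
    intro y hy <;>
    simp only [coe_filter, mem_piFinset, mem_compl, mem_singleton, Set.mem_ofPred_eq,
      Fin.sum_univ_succ, Fin.tail] at hy ⊢
  · refine ⟨fun i => hy.1 i.succ, fun h => hy.1 0 ?_⟩
    simpa [h] using hy.2
  · exact ⟨Fin.cons (neg_ne_zero.2 hy.2) hy.1, by simp⟩
  · conv_rhs => rw [← Fin.cons_self_tail y]
    congr 1
    linear_combination -hy.2
  · simp

lemma card_mul_card_sum_eq_zero (n : ℕ) :
    (card F : ℤ) * #{y ∈ piFinset fun _ : Fin n => ({0}ᶜ : Finset F) | ∑ i, y i = 0} =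
      ((card F : ℤ) - 1) ^ n + (-1) ^ n * ((card F : ℤ) - 1) := by
  induction n with
  | zero => simp [filter_true_of_mem]
  | succ n ih =>
    have hsplit := card_sum_eq_zero_add_card_sum_ne_zero (F := F) (Fin n)
    rw [Fintype.card_fin, ← card_sum_eq_zero_succ] at hsplit
    zify [Fintype.card_pos (α := F)] at hsplit
    linear_combination (card F : ℤ) * hsplit - ih

lemma card_mul_card_filter_castAdd_not_mem (h m : ℕ) :
    (card F : ℤ) * #{x : Fin (h + m) → F | (fun j => x (Fin.castAdd m j)) ∉
        {y ∈ piFinset fun _ : Fin h => ({0}ᶜ : Finset F) | ∑ i, y i ≠ 0}} =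
      card F ^ m * (card F ^ (h + 1) - (card F - 1) ^ (h + 1) + (-1) ^ h * (card F - 1)) := by
  set T := {y ∈ piFinset fun _ : Fin h => ({0}ᶜ : Finset F) | ∑ i, y i ≠ 0}
  have hsplit := card_filter_add_card_filter_not (s := univ)
    (fun x : Fin (h + m) → F => (fun j => x (Fin.castAdd m j)) ∈ T)
  rw [card_filter_comp_castAdd h m (· ∈ T), filter_univ_mem, card_univ, card_fun,
    Fintype.card_fin] at hsplit
  have hT := card_sum_eq_zero_add_card_sum_ne_zero (F := F) (Fin h)
  rw [Fintype.card_fin] at hT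
  zify [Fintype.card_pos (α := F)] at hsplit hT
  linear_combination (card F : ℤ) * hsplit - (card F : ℤ) ^ (m + 1) * hT +
    (card F : ℤ) ^ m * card_mul_card_sum_eq_zero (F := F) h

lemma setOf_prod_mul_sum_eq_zero (h m : ℕ) :
    {x : Fin (h + m) → F | x ≠ 0 ∧
        (∏ i ∈ univ.filter (fun i : Fin (h + m) => (i : ℕ) < h), x i) *
          (∑ i ∈ univ.filter (fun i : Fin (h + m) => (i : ℕ) < h), x i) = 0} =
      ↑(({x | (fun j => x (Fin.castAdd m j)) ∉
        {y ∈ piFinset fun _ : Fin h => ({0}ᶜ : Finset F) | ∑ i, y i ≠ 0}} :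
          Finset (Fin (h + m) → F)).erase 0) := by
  ext x
  simp [Fin.filter_val_lt_eq_map_castAddEmb, prod_eq_zero_iff]
  grind

lemma card_mul_ncard_prod_mul_sum_eq_zero_add_one (h m : ℕ) :
    (card F : ℚ) * ({x : Fin (h + m) → F | x ≠ 0 ∧
        (∏ i ∈ univ.filter (fun i : Fin (h + m) => (i : ℕ) < h), x i) *
          (∑ i ∈ univ.filter (fun i : Fin (h + m) => (i : ℕ) < h), x i) = 0}.ncard + 1) =
      card F ^ m * (card F ^ (h + 1) - (card F - 1) ^ (h + 1) + (-1) ^ h * (card F - 1)) := by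
  rw [setOf_prod_mul_sum_eq_zero, Set.ncard_coe_finset, ← Nat.cast_add_one, card_erase_add_one]
  · exact_mod_cast card_mul_card_filter_castAdd_not_mem h m
  · simp

end

theorem stmt_2_general {F : Type} [Field F] [Fintype F]
    (q h k : ℕ) (hq : Fintype.card F = q) (hk : h ≤ k) :
    (Set.ncard {x : Fin k → F | x ≠ 0 ∧
        (∏ i ∈ Finset.univ.filter (fun i : Fin k => (i : ℕ) < h), x i) *
          (∑ i ∈ Finset.univ.filter (fun i : Fin k => (i : ℕ) < h), x i) = 0} : ℚ) =
      (q : ℚ) ^ ((k : ℤ) - h - 1) *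
        ((q : ℚ) ^ (h + 1) - ((q : ℚ) - 1) ^ (h + 1) + (-1) ^ h * ((q : ℚ) - 1)) - 1 := by
  classical
  subst hq
  obtain ⟨m, rfl⟩ := Nat.exists_eq_add_of_le hk
  have hcount := card_mul_ncard_prod_mul_sum_eq_zero_add_one (F := F) h m
  have hexp : ((h + m : ℕ) : ℤ) - h - 1 = (m : ℤ) - 1 := by push_cast; ring
  rw [hexp, zpow_sub₀ (by simp), zpow_natCast, zpow_one]
  field_simp
  linear_combination hcount

theorem stmt_2 {F : Type} [Field F] [Fintype F] [DecidableEq F]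
    (q h k : ℕ) (hq : Fintype.card F = q) (hh : 2 ≤ h) (hk : h ≤ k) :
    (Set.ncard {x : Fin k → F | x ≠ 0 ∧
        (∏ i ∈ Finset.univ.filter (fun i : Fin k => (i : ℕ) < h), x i) *
          (∑ i ∈ Finset.univ.filter (fun i : Fin k => (i : ℕ) < h), x i) = 0} : ℚ) =
      (q : ℚ) ^ ((k : ℤ) - h - 1) *
        ((q : ℚ) ^ (h + 1) - ((q : ℚ) - 1) ^ (h + 1) + (-1) ^ h * ((q : ℚ) - 1)) - 1 :=
  stmt_2_general q h k hq hk
end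

section
/- Let q be a prime power, k ≥ 2, and let D be a subset of GF(q)^k such that for every hyperplane H (i.e., every (k-1)-dimensional linear subspace), the span of D ∩ H equals H. Suppose moreover that a·D = D for all a ∈ GF(q)^*. Then for every nonzero a ∈ GF(q)^k and every c ∈ GF(q) there exists x ∈ D with ⟨a,x⟩ = c. -/
noncomputable def dotL {F : Type} [Field F] {k : ℕ} (b : Fin k → F) :
    (Fin k → F) →ₗ[F] F :=
  ∑ i, b i • (LinearMap.proj i)

lemma dotL_apply {F : Type} [Field F] {k : ℕ} (b x : Fin k → F) :
    dotL b x = ∑ i, b i * x i := by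
  simp [dotL]

lemma finrank_ker_dotL {F : Type} [Field F] {k : ℕ} (b : Fin k → F) (hb : b ≠ 0) :
    Module.finrank F (LinearMap.ker (dotL b)) = k - 1 := by
  classical
  obtain ⟨i, hi⟩ : ∃ i, b i ≠ 0 := by
    by_contra h
    push_neg at h
    exact hb (funext h)
  have hsurj : Function.Surjective (dotL b) := by
    intro y
    refine ⟨(y * (b i)⁻¹) • (Pi.single i 1 : Fin k → F), ?_⟩
    rw [dotL_apply]
    have : ∀ j, b j * ((y * (b i)⁻¹) • (Pi.single i 1 : Fin k → F)) j
        = if j = i then y * (b i)⁻¹ * b i else 0 := by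
      intro j
      by_cases hj : j = i <;> simp [hj, Pi.single_apply, mul_comm]
    rw [Finset.sum_congr rfl fun j _ => this j]
    simp [hi]
  have hr : LinearMap.range (dotL b) = ⊤ := LinearMap.range_eq_top.mpr hsurj
  have h1 : Module.finrank F (LinearMap.range (dotL b)) = 1 := by
    rw [hr]; simp
  have h2 := LinearMap.finrank_range_add_finrank_ker (dotL b)
  rw [h1, Module.finrank_pi] at h2
  simp at h2
  omega

theorem stmt_4 {F : Type} [Field F] [Fintype F] [DecidableEq F]
    (q k : ℕ) (hq : Fintype.card F = q) (hk : 2 ≤ k)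
    (D : Set (Fin k → F))
    (hcut : ∀ H : Submodule F (Fin k → F), Module.finrank F H = k - 1 →
      Submodule.span F (D ∩ (H : Set (Fin k → F))) = H)
    (hscal : ∀ a : F, a ≠ 0 → (fun x => a • x) '' D = D)
    (a : Fin k → F) (ha : a ≠ 0) (c : F) :
    ∃ x ∈ D, ∑ i, a i * x i = c := by
  classical
  have hka := finrank_ker_dotL a ha
  by_cases hc : c = 0
  · -- take any element of D ∩ ker (dotL a)
    have hspan := hcut (LinearMap.ker (dotL a)) hka
    have hne : (D ∩ (LinearMap.ker (dotL a) : Set (Fin k → F))).Nonempty := by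
      by_contra h
      rw [Set.not_nonempty_iff_eq_empty] at h
      rw [h, Submodule.span_empty] at hspan
      have : Module.finrank F (⊥ : Submodule F (Fin k → F)) = k - 1 := by
        rw [hspan]; exact hka
      simp at this
      omega
    obtain ⟨x, hxD, hxK⟩ := hne
    refine ⟨x, hxD, ?_⟩
    have := (LinearMap.mem_ker).mp hxK
    rw [dotL_apply] at this
    rw [this, hc]
  · -- find y ∈ D with dotL a y ≠ 0
    obtain ⟨v, hv⟩ : ∃ v, dotL a v ≠ 0 := by
      by_contra h
      push_neg at h
      obtain ⟨i, hi⟩ : ∃ i, a i ≠ 0 := by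
        by_contra h'
        push_neg at h'
        exact ha (funext h')
      have := h (Pi.single i 1)
      rw [dotL_apply] at this
      simp [Pi.single_apply] at this
      exact hi this
    have hv0 : v ≠ 0 := by
      intro h
      apply hv
      rw [h]; simp
    -- find b ≠ 0 with ∑ v i * b i = 0
    have hkv := finrank_ker_dotL v hv0
    have hkerne : LinearMap.ker (dotL v) ≠ ⊥ := by
      intro h
      rw [h] at hkv
      simp at hkv
      omega
    obtain ⟨b, hbmem, hb0⟩ := Submodule.exists_mem_ne_zero_of_ne_bot hkerne
    have hkb := finrank_ker_dotL b hb0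
    have hspan := hcut (LinearMap.ker (dotL b)) hkb
    have hvH : v ∈ LinearMap.ker (dotL b) := by
      rw [LinearMap.mem_ker, dotL_apply]
      have := (LinearMap.mem_ker).mp hbmem
      rw [dotL_apply] at this
      rw [← this]
      exact Finset.sum_congr rfl fun i _ => mul_comm _ _
    -- some y ∈ D ∩ H' with dotL a y ≠ 0
    obtain ⟨y, ⟨hyD, hyH⟩, hy⟩ :
        ∃ y ∈ D ∩ (LinearMap.ker (dotL b) : Set (Fin k → F)), dotL a y ≠ 0 := by
      by_contra h
      push_neg at h
      have hle : Submodule.span F (D ∩ (LinearMap.ker (dotL b) : Set (Fin k → F)))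
          ≤ LinearMap.ker (dotL a) := by
        rw [Submodule.span_le]
        intro z hz
        exact (LinearMap.mem_ker).mpr (h z hz)
      rw [hspan] at hle
      exact hv (hle hvH)
    set t := dotL a y with ht
    have hst : c * t⁻¹ ≠ 0 := mul_ne_zero hc (inv_ne_zero hy)
    have hxD : (c * t⁻¹) • y ∈ D := by
      rw [← hscal (c * t⁻¹) hst]
      exact ⟨y, hyD, rfl⟩
    refine ⟨(c * t⁻¹) • y, hxD, ?_⟩
    have : ∑ i, a i * ((c * t⁻¹) • y) i = (c * t⁻¹) * ∑ i, a i * y i := by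
      rw [Finset.mul_sum]
      exact Finset.sum_congr rfl fun i _ => by simp [Pi.smul_apply]; ring
    rw [this, ← dotL_apply, ← ht, mul_assoc, inv_mul_cancel₀ hy, mul_one]
end

section
/- Let q be a prime power, n ≥ 2, and D a subset of an n-dimensional vector space V over GF(q) with 0 ∉ D. Then the following are equivalent: (1) for any two distinct hyperplanes (codimension-1 linear subspaces) H, H' of V, D ∩ H is not contained in H'; (2) for every hyperplane H of V, the span of D ∩ H equals H. -/
open Module Submodule

lemma aux_ext {F V : Type} [Field F] [AddCommGroup V] [Module F V]
    [FiniteDimensional F V] (k : ℕ) (hkV : k ≤ finrank F V) :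
    ∀ W : Submodule F V, finrank F W ≤ k → ∃ H : Submodule F V, W ≤ H ∧ finrank F H = k := by
  induction k with
  | zero => intro W hW
            exact ⟨W, le_rfl, Nat.le_antisymm hW (Nat.zero_le _)⟩
  | succ k ih =>
    intro W hW
    rcases Nat.lt_or_ge (finrank F W) (k+1) with h | h
    · obtain ⟨H, hWH, hH⟩ := ih (le_of_lt hkV) W (Nat.lt_succ_iff.mp h)
      have hlt : finrank F H < finrank F V := lt_of_lt_of_le (by omega) hkV
      obtain ⟨x, hx⟩ := H.exists_of_finrank_lt hlt
      have hxH : x ∉ H := by simpa using hx 1 one_ne_zero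
      have hx0 : x ≠ 0 := fun h0 => hxH (h0 ▸ H.zero_mem)
      refine ⟨(Submodule.span F {x}) ⊔ H, le_trans hWH le_sup_right, ?_⟩
      have hinf : (Submodule.span F {x}) ⊓ H = ⊥ := by
        rw [eq_bot_iff]
        rintro y ⟨hy1, hy2⟩
        obtain ⟨r, rfl⟩ := Submodule.mem_span_singleton.mp hy1
        rcases eq_or_ne r 0 with rfl | hr
        · simp
        · exact absurd hy2 (hx r hr)
      have := Submodule.finrank_sup_add_finrank_inf_eq (Submodule.span F {x}) H
      rw [hinf] at this
      simp [finrank_span_singleton hx0, hH] at this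
      omega
    · exact ⟨W, le_rfl, Nat.le_antisymm hW h⟩

theorem stmt_5 {F V : Type} [Field F] [Fintype F] [AddCommGroup V] [Module F V]
    [FiniteDimensional F V]
    (q n : ℕ) (hq : Fintype.card F = q) (hn : 2 ≤ n) (hdim : Module.finrank F V = n)
    (D : Set V) (hD : (0 : V) ∉ D) :
    (∀ H H' : Submodule F V, Module.finrank F H = n - 1 → Module.finrank F H' = n - 1 →
        H ≠ H' → ¬ (D ∩ (H : Set V) ⊆ (H' : Set V)))
      ↔ (∀ H : Submodule F V, Module.finrank F H = n - 1 →
          Submodule.span F (D ∩ (H : Set V)) = H) := by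
  constructor
  · intro h1 H hH
    by_contra hne
    set S := Submodule.span F (D ∩ (H : Set V)) with hS
    have hSH : S ≤ H := Submodule.span_le.mpr Set.inter_subset_right
    have hlt : S < H := lt_of_le_of_ne hSH hne
    have hSr : finrank F S < n - 1 := hH ▸ Submodule.finrank_lt_finrank_of_lt hlt
    -- pick v ∉ H
    have hHV : finrank F H < finrank F V := by rw [hdim, hH]; omega
    obtain ⟨v, hv⟩ := H.exists_of_finrank_lt hHV
    have hvH : v ∉ H := by simpa using hv 1 one_ne_zero
    have hv0 : v ≠ 0 := fun h0 => hvH (h0 ▸ H.zero_mem)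
    -- W = S ⊔ span v has finrank ≤ n-1
    have hW : finrank F ((Submodule.span F {v}) ⊔ S : Submodule F V) ≤ n - 1 := by
      have := Submodule.finrank_add_le_finrank_add_finrank (Submodule.span F {v}) S
      rw [finrank_span_singleton hv0] at this
      omega
    obtain ⟨H', hle, hH'⟩ := aux_ext (n-1) (by omega) _ hW
    have hvH' : v ∈ H' := hle (le_sup_left (a := Submodule.span F {v}) (b := S)
      (Submodule.mem_span_singleton_self v))
    have hne' : H ≠ H' := fun e => hvH (e ▸ hvH')
    exact h1 H H' hH hH' hne'
      (fun x hx => (le_trans le_sup_right hle : S ≤ H') (Submodule.subset_span hx))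
  · intro h2 H H' hH hH' hne hsub
    have : H ≤ H' := by
      rw [← h2 H hH]
      exact Submodule.span_le.mpr hsub
    exact hne (Submodule.eq_of_le_of_finrank_eq this (by rw [hH, hH']))
end

section
/- Let q be a prime power, k ≥ 3, and S a nonempty proper subset of GF(q)^k \ {0} with dim Span(S) ≥ 3. Let D_S = (⋃_{a ∈ S} H_a) \ {0}, where H_a = {x ∈ GF(q)^k : ⟨a,x⟩ = 0}. Then for every hyperplane H of GF(q)^k, the span of D_S ∩ H equals H (i.e., D_S is a vectorial cutting blocking set). -/
/-!
Let `W` be the span of `D_S ∩ H` and suppose `W ≠ H`, so `dim W ≤ k - 2`. For each `a ∈ S`,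
`H_a ∩ H ⊆ W` and `dim (H_a ∩ H) ≥ k - 2`, forcing `H_a ∩ H = W`. Then every `a ∈ S` annihilates
`W`, so `Span(S) ⊆ W^⊥`, and `dim W^⊥ ≥ 3` gives `dim W ≤ k - 3 < dim (H_a ∩ H)`, a contradiction.
-/

open Module

variable {K V : Type*} [Field K] [AddCommGroup V] [Module K V] [FiniteDimensional K V]

/-- With `a ∈ S` read as the functional `⟨a, ·⟩`, this is the paper's `D_S ∪ {0}`. -/
def unionKer (S : Set (Dual K V)) : Set V := {x | ∃ f ∈ S, f x = 0}

theorem Module.Dual.finrank_le_finrank_ker_inf_add_two (f : Dual K V) {H : Submodule K V}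
    (hH : finrank K H + 1 = finrank K V) :
    finrank K V ≤ finrank K ↥(LinearMap.ker f ⊓ H) + 2 := by
  have hrange : finrank K (LinearMap.range f) ≤ 1 :=
    (Submodule.finrank_le _).trans (finrank_self K).le
  have := LinearMap.finrank_range_add_finrank_ker f
  have := Submodule.finrank_sup_add_finrank_inf_eq (LinearMap.ker f) H
  have := Submodule.finrank_le (LinearMap.ker f ⊔ H)
  omega

theorem span_unionKer_inter_eq_of_three_le_finrank_span {S : Set (Dual K V)} (hS : S.Nonempty)
    (hdim : 3 ≤ finrank K (Submodule.span K S)) {H : Submodule K V}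
    (hH : finrank K H + 1 = finrank K V) :
    Submodule.span K (unionKer S ∩ H) = H := by
  set W := Submodule.span K (unionKer S ∩ H)
  have hWH : W ≤ H := Submodule.span_le.mpr fun _ hx => hx.2
  have hker_le : ∀ f ∈ S, LinearMap.ker f ⊓ H ≤ W := fun f hf x hx =>
    Submodule.subset_span ⟨⟨f, hf, hx.1⟩, hx.2⟩
  by_contra hne
  have hWdim : finrank K W + 2 ≤ finrank K V := by
    have := Submodule.finrank_lt_finrank_of_lt (lt_of_le_of_ne hWH hne)
    omega
  have hker_eq : ∀ f ∈ S, LinearMap.ker f ⊓ H = W := fun f hf =>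
    Submodule.eq_of_le_of_finrank_le (hker_le f hf) <| by
      have := f.finrank_le_finrank_ker_inf_add_two hH
      omega
  have hspan : Submodule.span K S ≤ W.dualAnnihilator :=
    Submodule.span_le.mpr fun f hf => (Submodule.mem_dualAnnihilator f).mpr fun w hw =>
      ((hker_eq f hf).symm ▸ hw : w ∈ LinearMap.ker f ⊓ H).1
  obtain ⟨f, hf⟩ := hS
  have := Submodule.finrank_mono hspan
  have := Subspace.finrank_add_finrank_dualAnnihilator_eq W
  have := f.finrank_le_finrank_ker_inf_add_two hH
  rw [hker_eq f hf] at this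
  omega

theorem stmt_6_general {F : Type} [Field F]
    (k : ℕ)
    (S : Set (Fin k → F)) (hS : S.Nonempty)
    (hdim : 3 ≤ Module.finrank F (Submodule.span F S))
    (H : Submodule F (Fin k → F)) (hH : Module.finrank F H = k - 1) :
    Submodule.span F
        ({x : Fin k → F | x ≠ 0 ∧ ∃ a ∈ S, ∑ i, a i * x i = 0} ∩ (H : Set (Fin k → F)))
      = H := by
  set e := dotProductEquiv F (Fin k)
  have hdim' : 3 ≤ finrank F (Submodule.span F (e '' S)) := by
    rwa [← LinearEquiv.coe_coe, Submodule.span_image, LinearEquiv.finrank_map_eq]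
  have hH' : finrank F H + 1 = finrank F (Fin k → F) := by
    -- `k - 1` is truncated; `hdim` forces `3 ≤ k`.
    have := (Submodule.finrank_le (Submodule.span F S)).trans_eq (finrank_fin_fun F)
    rw [hH, finrank_fin_fun]
    omega
  have hset : {x : Fin k → F | x ≠ 0 ∧ ∃ a ∈ S, ∑ i, a i * x i = 0} ∩ (H : Set (Fin k → F))
      = (unionKer (e '' S) ∩ H) \ {0} := by
    ext x
    simp only [ne_eq, Set.mem_inter_iff, Set.mem_ofPred_eq, SetLike.mem_coe, unionKer,
      Set.mem_image, exists_exists_and_eq_and, dotProductEquiv_apply_apply, dotProduct,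
      Set.mem_sdiff, Set.mem_singleton_iff, e]
    tauto
  rw [hset, Submodule.span_sdiff_singleton_zero,
    span_unionKer_inter_eq_of_three_le_finrank_span (hS.image e) hdim' hH']

theorem stmt_6 {F : Type} [Field F] [Fintype F] [DecidableEq F]
    (q k : ℕ) (hq : Fintype.card F = q) (hk : 3 ≤ k)
    (S : Set (Fin k → F)) (hS : S.Nonempty) (hSsub : S ⊂ {x : Fin k → F | x ≠ 0})
    (hdim : 3 ≤ Module.finrank F (Submodule.span F S))
    (H : Submodule F (Fin k → F)) (hH : Module.finrank F H = k - 1) :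
    Submodule.span F
        ({x : Fin k → F | x ≠ 0 ∧ ∃ a ∈ S, ∑ i, a i * x i = 0} ∩ (H : Set (Fin k → F)))
      = H :=
  stmt_6_general k S hS hdim H hH
end

section
/- Let q be a prime power, k ≥ 3, and S a nonempty proper subset of GF(q)^k \ {0} with dim Span(S) ≤ 2. Let D_S = (⋃_{a ∈ S} H_a) \ {0}, where H_a = {x : ⟨a,x⟩ = 0}. If D_S ≠ GF(q)^k \ {0}, then D_S is not a vectorial cutting blocking set: there exist two distinct hyperplanes H, H' with D_S ∩ H ⊆ H'. -/
/-!
Pick `v` orthogonal to no element of `S`, and a plane `W ⊇ span S`. Some `c ≠ 0` in `W`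
is orthogonal to `v`; take `H = c^⊥ ∋ v` and `H' = a₀^⊥ ∌ v` for any `a₀ ∈ S`. If `x ∈ H` is
orthogonal to some `a ∈ S`, then `a` and `c` are independent (only `a` pairs nontrivially
with `v`), so they span `W`, and `x` is orthogonal to all of `W`, in particular to `a₀`.
-/

open Module Submodule

section

variable {K E : Type*} [DivisionRing K] [AddCommGroup E] [Module K E]

theorem Submodule.exists_le_finrank_eq [FiniteDimensional K E] (U : Submodule K E) {n : ℕ}
    (hU : finrank K U ≤ n) (hn : n ≤ finrank K E) :
    ∃ W : Submodule K E, U ≤ W ∧ finrank K W = n := by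
  induction n, hU using Nat.le_induction with
  | base => exact ⟨U, le_rfl, rfl⟩
  | succ n _ ih =>
    obtain ⟨W, hUW, hW⟩ := ih (by omega)
    obtain ⟨x, -, hx⟩ := SetLike.exists_of_lt (lt_top_of_finrank_lt_finrank (hW ▸ hn))
    exact ⟨W ⊔ K ∙ x, hUW.trans le_sup_left, by rw [finrank_sup_span_singleton hx, hW]⟩

theorem Submodule.exists_ne_zero_apply_eq_zero_of_one_lt_finrank (W : Submodule K E)
    [FiniteDimensional K W] (hW : 1 < finrank K W) (φ : Dual K E) :
    ∃ c ∈ W, c ≠ 0 ∧ φ c = 0 := by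
  have hker : LinearMap.ker (φ.domRestrict W) ≠ ⊥ :=
    LinearMap.ker_ne_bot_of_finrank_lt (by rwa [finrank_self])
  obtain ⟨w, hw, hw0⟩ := exists_mem_ne_zero_of_ne_bot hker
  exact ⟨w, w.2, by simpa using hw0, hw⟩

theorem linearIndependent_pair_of_apply_eq_zero_of_apply_ne_zero {φ : Dual K E} {a c : E}
    (hc : c ≠ 0) (hφc : φ c = 0) (hφa : φ a ≠ 0) : LinearIndependent K ![a, c] := by
  refine linearIndependent_fin2.2 ⟨hc, fun t (htc : t • c = a) => hφa ?_⟩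
  rw [← htc, map_smul, hφc, smul_zero]

theorem Submodule.le_ker_of_linearIndependent_pair [FiniteDimensional K E] {W : Submodule K E}
    (hW : finrank K W = 2) {a c : E} (ha : a ∈ W) (hc : c ∈ W)
    (hac : LinearIndependent K ![a, c]) {φ : Dual K E} (hφa : φ a = 0) (hφc : φ c = 0) :
    W ≤ LinearMap.ker φ := by
  have hspan : span K (Set.range ![a, c]) = W := by
    refine eq_of_le_of_finrank_le (span_le.2 ?_) (by rw [hW, finrank_span_eq_card hac]; rfl)
    rintro _ ⟨i, rfl⟩
    fin_cases i <;> assumption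
  rw [← hspan, span_le]
  rintro _ ⟨i, rfl⟩
  fin_cases i <;> assumption

end

theorem finrank_ker_dotProductEquiv {K ι : Type*} [Field K] [Fintype ι] [DecidableEq ι]
    {c : ι → K} (hc : c ≠ 0) :
    finrank K (LinearMap.ker (dotProductEquiv K ι c)) = Fintype.card ι - 1 := by
  have := Dual.finrank_ker_add_one_of_ne_zero ((dotProductEquiv K ι).map_ne_zero_iff.2 hc)
  rw [finrank_fintype_fun_eq_card] at this
  omega

theorem stmt_7_general {F : Type} [Field F] (k : ℕ) (hk : 3 ≤ k)
    (S : Set (Fin k → F)) (hS : S.Nonempty) (hSsub : S ⊂ {x : Fin k → F | x ≠ 0})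
    (hdim : Module.finrank F (Submodule.span F S) ≤ 2)
    (hne : {x : Fin k → F | x ≠ 0 ∧ ∃ a ∈ S, ∑ i, a i * x i = 0}
      ≠ {x : Fin k → F | x ≠ 0}) :
    ∃ H H' : Submodule F (Fin k → F), Module.finrank F H = k - 1 ∧
      Module.finrank F H' = k - 1 ∧ H ≠ H' ∧
      {x : Fin k → F | x ≠ 0 ∧ ∃ a ∈ S, ∑ i, a i * x i = 0} ∩ (H : Set (Fin k → F))
        ⊆ (H' : Set (Fin k → F)) := by
  obtain ⟨v, hvS⟩ : ∃ v : Fin k → F, ∀ a ∈ S, a ⬝ᵥ v ≠ 0 := by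
    by_contra! h
    exact hne (Set.ext fun x => ⟨And.left, fun hx => ⟨hx, h x⟩⟩)
  obtain ⟨a₀, ha₀⟩ := hS
  obtain ⟨W, hSW, hW⟩ := (span F S).exists_le_finrank_eq hdim (by simp; omega)
  obtain ⟨c, hcW, hc0, hcv⟩ := W.exists_ne_zero_apply_eq_zero_of_one_lt_finrank (by omega)
    (dotProductEquiv F _ v)
  refine ⟨LinearMap.ker (dotProductEquiv F _ c), LinearMap.ker (dotProductEquiv F _ a₀),
    by simpa using finrank_ker_dotProductEquiv hc0,
    by simpa using finrank_ker_dotProductEquiv (hSsub.1 ha₀), fun hHH' => ?_, ?_⟩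
  · have hv : v ∈ LinearMap.ker (dotProductEquiv F _ c) := by simpa [dotProduct_comm] using hcv
    rw [hHH'] at hv
    exact hvS a₀ ha₀ hv
  · rintro x ⟨⟨-, a, haS, hax : a ⬝ᵥ x = 0⟩, hcx⟩
    have hac := linearIndependent_pair_of_apply_eq_zero_of_apply_ne_zero hc0 hcv
      (φ := dotProductEquiv F _ v) (by simpa [dotProduct_comm] using hvS a haS)
    have hWx := le_ker_of_linearIndependent_pair hW (hSW (subset_span haS)) hcW hac
      (φ := dotProductEquiv F _ x) (by simpa [dotProduct_comm] using hax)
      (by simpa [dotProduct_comm] using hcx)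
    simpa [dotProduct_comm] using hWx (hSW (subset_span ha₀))

theorem stmt_7 {F : Type} [Field F] [Fintype F] [DecidableEq F]
    (q k : ℕ) (hq : Fintype.card F = q) (hk : 3 ≤ k)
    (S : Set (Fin k → F)) (hS : S.Nonempty) (hSsub : S ⊂ {x : Fin k → F | x ≠ 0})
    (hdim : Module.finrank F (Submodule.span F S) ≤ 2)
    (hne : {x : Fin k → F | x ≠ 0 ∧ ∃ a ∈ S, ∑ i, a i * x i = 0}
      ≠ {x : Fin k → F | x ≠ 0}) :
    ∃ H H' : Submodule F (Fin k → F), Module.finrank F H = k - 1 ∧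
      Module.finrank F H' = k - 1 ∧ H ≠ H' ∧
      {x : Fin k → F | x ≠ 0 ∧ ∃ a ∈ S, ∑ i, a i * x i = 0} ∩ (H : Set (Fin k → F))
        ⊆ (H' : Set (Fin k → F)) :=
  stmt_7_general k hk S hS hSsub hdim hne
end

section
/- Let q be a prime power and k a positive integer. Every subset B of GF(q)^k that meets every affine hyperplane of GF(q)^k has cardinality at least k(q-1) + 1. -/
open Finset MvPolynomial

theorem stmt_9 {F : Type} [Field F] [Fintype F] [DecidableEq F]
    (q k : ℕ) (hq : Fintype.card F = q) (hk : 1 ≤ k)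
    (B : Finset (Fin k → F))
    (hB : ∀ a : Fin k → F, a ≠ 0 → ∀ b : F, ∃ x ∈ B, ∑ i, a i * x i = b) :
    k * (q - 1) + 1 ≤ B.card := by
  subst hq
  -- pick a base point x0 ∈ B
  have hne : ∃ a : Fin k → F, a ≠ 0 := by
    refine ⟨fun _ => 1, ?_⟩
    intro h
    have := congrFun h ⟨0, hk⟩
    simp at this
  obtain ⟨a0, ha0⟩ := hne
  obtain ⟨x0, hx0, -⟩ := hB a0 ha0 0
  -- translated set
  set S : Finset (Fin k → F) := (B.erase x0).image (fun x => x - x0) with hS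
  have hScard : S.card = B.card - 1 := by
    rw [hS, Finset.card_image_of_injective _ (sub_left_injective), Finset.card_erase_of_mem hx0]
  -- blocking: for a ≠ 0 there's y ∈ S with a·y = 1
  have hblock : ∀ a : Fin k → F, a ≠ 0 → ∃ y ∈ S, ∑ i, a i * y i = 1 := by
    intro a ha
    obtain ⟨x, hx, hxa⟩ := hB a ha ((∑ i, a i * x0 i) + 1)
    refine ⟨x - x0, Finset.mem_image_of_mem _ (Finset.mem_erase.mpr ⟨?_, hx⟩), ?_⟩
    · rintro rfl; simp at hxa
    · simp only [Pi.sub_apply, mul_sub, Finset.sum_sub_distrib]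
      rw [hxa]; ring
  -- the polynomial
  set P : MvPolynomial (Fin k) F :=
    ∏ y ∈ S, ((∑ i, C (y i) * X i) - 1) with hP
  have heval : ∀ a : Fin k → F, eval a P = ∏ y ∈ S, ((∑ i, y i * a i) - 1) := by
    intro a
    rw [hP]
    simp [eval_prod]
  have hzero : ∀ a : Fin k → F, a ≠ 0 → eval a P = 0 := by
    intro a ha
    rw [heval]
    obtain ⟨y, hy, hya⟩ := hblock a ha
    apply Finset.prod_eq_zero hy
    rw [show ∑ i, y i * a i = ∑ i, a i * y i by simp [mul_comm], hya]
    ring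
  have hP0 : eval (0 : Fin k → F) P = (-1) ^ S.card := by
    rw [heval]; simp
  have hsum : ∑ x : Fin k → F, eval x P = (-1) ^ S.card := by
    rw [Finset.sum_eq_single (0 : Fin k → F)]
    · exact hP0
    · intro x _ hx; exact hzero x hx
    · intro h; exact absurd (Finset.mem_univ _) h
  have hdeg : (Fintype.card F - 1) * k ≤ P.totalDegree := by
    by_contra hlt
    push_neg at hlt
    have := MvPolynomial.sum_eval_eq_zero P (by simpa using hlt)
    rw [hsum] at this
    exact pow_ne_zero _ (neg_ne_zero.mpr one_ne_zero) this
  have hdegle : P.totalDegree ≤ S.card := by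
    rw [hP]
    refine le_trans (MvPolynomial.totalDegree_finset_prod _ _) ?_
    calc ∑ y ∈ S, ((∑ i, C (y i) * X i) - 1).totalDegree
        ≤ ∑ y ∈ S, 1 := by
          refine Finset.sum_le_sum ?_
          intro y _
          rw [sub_eq_add_neg]
          refine le_trans (MvPolynomial.totalDegree_add _ _) ?_
          simp only [totalDegree_neg, totalDegree_one, max_le_iff]
          constructor
          · refine MvPolynomial.totalDegree_finsetSum_le ?_
            intro i _
            refine le_trans (MvPolynomial.totalDegree_mul _ _) ?_
            simp [MvPolynomial.totalDegree_X]
          · exact Nat.zero_le _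
      _ = S.card := by simp
  have h1 : (Fintype.card F - 1) * k ≤ S.card := le_trans hdeg hdegle
  have hBpos : 1 ≤ B.card := Finset.card_pos.mpr ⟨x0, hx0⟩
  have : (Fintype.card F - 1) * k = k * (Fintype.card F - 1) := mul_comm _ _
  omega
end

section
/- Let q be a prime power and k ≥ 2. If C is a minimal linear code of dimension k over GF(q) with minimum distance d, then d ≥ (q-1)(k-1) + 1. -/
/-!
Let `c ≠ 0` be a codeword and `W` a complement of `F ∙ c` in `C`, so `dim W = k - 1`. For `i` in
the support of `c`, the functional `w ↦ wᵢ / cᵢ` on `W` is a point of the dual space. These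
`wt(c)` points meet every affine hyperplane `{φ : φ w = α}`, `w ≠ 0`: otherwise `w - α c` would be
a codeword, not a multiple of `c`, whose support contains that of `c`, contradicting minimality.
Jamison's bound for such blocking sets gives `wt(c) ≥ (k - 1)(q - 1) + 1`; it follows from
Chevalley–Warning, since a polynomial vanishing on `F^m` everywhere but at the origin has degree at
least `m (q - 1)`.
-/

open Finset MvPolynomial Module

variable {F : Type*} [Field F]

namespace MvPolynomial

theorem card_sub_one_mul_le_totalDegree [Fintype F] {σ : Type*} [Fintype σ] [DecidableEq σ]
    {P : MvPolynomial σ F} (h0 : eval 0 P ≠ 0) (h : ∀ u ≠ 0, eval u P = 0) :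
    (Fintype.card F - 1) * Fintype.card σ ≤ P.totalDegree := by
  by_contra! hlt
  refine h0 ?_
  rw [← P.sum_eval_eq_zero hlt, sum_eq_single_of_mem 0 (mem_univ _)]
  exact fun u _ hu => h u hu

theorem totalDegree_one_sub_linear_le {σ : Type*} [Fintype σ] (a : σ → F) :
    (1 - ∑ j, C (a j) * X j : MvPolynomial σ F).totalDegree ≤ 1 := by
  refine (totalDegree_sub _ _).trans (max_le (by simp) ((totalDegree_finsetSum _ _).trans ?_))
  refine Finset.sup_le fun j _ => (totalDegree_mul _ _).trans ?_
  simp [totalDegree_X]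

end MvPolynomial

theorem jamison_bound [Fintype F] {ι σ : Type*} [Fintype σ] [Nonempty σ] (s : Finset ι)
    (b : ι → σ → F) (hb : ∀ u : σ → F, u ≠ 0 → ∀ α : F, ∃ i ∈ s, b i ⬝ᵥ u = α) :
    (Fintype.card F - 1) * Fintype.card σ + 1 ≤ s.card := by
  classical
  have hone : (fun _ => 1 : σ → F) ≠ 0 := Function.ne_iff.mpr ⟨Classical.arbitrary σ, one_ne_zero⟩
  obtain ⟨i₀, hi₀, -⟩ := hb _ hone 0
  -- For `u ≠ 0` the hyperplane `u ⬝ᵥ x = u ⬝ᵥ b i₀ + 1` avoids `b i₀`, so it is met by some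
  -- other `b i`, whose factor of `P` then vanishes at `u`.
  set P : MvPolynomial σ F := ∏ i ∈ s.erase i₀, (1 - ∑ j, C (b i j - b i₀ j) * X j)
  have hP : ∀ u, eval u P = ∏ i ∈ s.erase i₀, (1 - (b i - b i₀) ⬝ᵥ u) := fun u => by
    simp [P, dotProduct]
  have h0 : eval 0 P ≠ 0 := by rw [hP]; simp
  have hvanish : ∀ u ≠ 0, eval u P = 0 := fun u hu => by
    obtain ⟨i, hi, hiu⟩ := hb u hu (b i₀ ⬝ᵥ u + 1)
    have hii₀ : i ≠ i₀ := by rintro rfl; simp at hiu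
    rw [hP]
    refine prod_eq_zero (mem_erase.mpr ⟨hii₀, hi⟩) ?_
    rw [sub_dotProduct, hiu]
    ring
  have hdeg : P.totalDegree ≤ (s.erase i₀).card :=
    (totalDegree_finsetProd _ _).trans <|
      (sum_le_sum fun i _ => totalDegree_one_sub_linear_le _).trans (by simp)
  have := (card_sub_one_mul_le_totalDegree h0 hvanish).trans hdeg
  rw [card_erase_of_mem hi₀] at this
  have := card_pos.mpr ⟨i₀, hi₀⟩
  omega

theorem jamison_bound_dual [Fintype F] {ι V : Type*} [AddCommGroup V] [Module F V]
    [FiniteDimensional F V] [Nontrivial V] (s : Finset ι) (p : ι → Dual F V)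
    (hp : ∀ v : V, v ≠ 0 → ∀ α : F, ∃ i ∈ s, p i v = α) :
    (Fintype.card F - 1) * finrank F V + 1 ≤ s.card := by
  let e := finBasis F V
  have : Nonempty (Fin (finrank F V)) := ⟨⟨0, finrank_pos⟩⟩
  simpa using jamison_bound s (fun i j => p i (e j)) fun u hu α => by
    obtain ⟨i, hi, hpi⟩ := hp _ (e.equivFun.symm.map_ne_zero_iff.mpr hu) α
    exact ⟨i, hi, by simpa [Basis.equivFun_symm_apply, dotProduct, mul_comm] using hpi⟩

def IsMinimalCode {ι : Type*} (C : Submodule F (ι → F)) : Prop :=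
  ∀ c ∈ C, c ≠ 0 → ∀ c' ∈ C, c' ≠ 0 → (∀ i, c' i ≠ 0 → c i ≠ 0) → ∃ lam : F, c' = lam • c

namespace IsMinimalCode

variable {ι : Type*} {C : Submodule F (ι → F)}

theorem exists_eq_zero_of_ne_smul (hC : IsMinimalCode C) {c x : ι → F} (hc : c ∈ C)
    (hc0 : c ≠ 0) (hx : x ∈ C) (hxc : ∀ a : F, x ≠ a • c) : ∃ i, c i ≠ 0 ∧ x i = 0 := by
  by_contra! hsupp
  have hx0 : x ≠ 0 := by simpa using hxc 0
  obtain ⟨a, rfl⟩ := hC x hx hx0 c hc hc0 hsupp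
  have ha : a ≠ 0 := by rintro rfl; simp at hc0
  exact hxc a⁻¹ (by rw [smul_smul, inv_mul_cancel₀ ha, one_smul])

theorem exists_coord_eq_of_isCompl (hC : IsMinimalCode C) {c : ι → F} (hc : c ∈ C)
    (hc0 : c ≠ 0) {W : Submodule F C} (hW : IsCompl (F ∙ (⟨c, hc⟩ : C)) W) {w : W} (hw : w ≠ 0)
    (α : F) : ∃ i, c i ≠ 0 ∧ (w : ι → F) i = α * c i := by
  have hxc : ∀ a : F, (w : ι → F) - α • c ≠ a • c := by
    intro a hwa
    have hwc : (w : C) = (a + α) • (⟨c, hc⟩ : C) := by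
      ext1
      simp [add_smul, ← hwa]
    have hwL : (w : C) ∈ F ∙ (⟨c, hc⟩ : C) :=
      Submodule.mem_span_singleton.mpr ⟨a + α, hwc.symm⟩
    have : (w : C) = 0 := Submodule.disjoint_def.mp hW.disjoint _ hwL w.2
    exact hw (by exact_mod_cast this)
  obtain ⟨i, hci, hxi⟩ := hC.exists_eq_zero_of_ne_smul hc hc0
    (C.sub_mem (w : C).2 (C.smul_mem α hc)) hxc
  exact ⟨i, hci, by simpa [sub_eq_zero] using hxi⟩

end IsMinimalCode

theorem stmt_10 {F : Type} [Field F] [Fintype F] [DecidableEq F]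
    (q n k : ℕ) (hq : Fintype.card F = q) (hk : 2 ≤ k)
    (C : Submodule F (Fin n → F)) (hdim : Module.finrank F C = k)
    (hmin : ∀ c ∈ C, c ≠ 0 → ∀ c' ∈ C, c' ≠ 0 →
      (∀ i, c' i ≠ 0 → c i ≠ 0) → ∃ lam : F, c' = lam • c) :
    ∀ c ∈ C, c ≠ 0 → (q - 1) * (k - 1) + 1 ≤ hammingNorm c := by
  intro c hc hc0
  have hc0' : (⟨c, hc⟩ : C) ≠ 0 := by simpa using hc0
  obtain ⟨W, hW⟩ := Submodule.exists_isCompl (F ∙ (⟨c, hc⟩ : C))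
  have hWdim : finrank F W = k - 1 := by
    have := Submodule.finrank_add_eq_of_isCompl hW
    rw [finrank_span_singleton hc0', hdim] at this
    omega
  have : Nontrivial W := Module.nontrivial_of_finrank_pos (R := F) (by omega)
  let p : Fin n → Dual F W :=
    fun i => (c i)⁻¹ • (LinearMap.proj i ∘ₗ C.subtype ∘ₗ W.subtype)
  have hblock := jamison_bound_dual (V := W) {i | c i ≠ 0} p fun w hw α => by
    obtain ⟨i, hci, hwi⟩ := IsMinimalCode.exists_coord_eq_of_isCompl hmin hc hc0 hW hw α
    exact ⟨i, by simpa using hci, by simp [p, hwi, inv_mul_cancel_left₀ hci, mul_comm α]⟩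
  rwa [hWdim, hq] at hblock
end

section
/- Let q be a prime power, h and k integers with 3 ≤ h ≤ k, and D = {(x_1,...,x_k) ∈ GF(q)^k \ {0} : x_1 ⋯ x_h = 0}. For nonzero a ∈ GF(q)^k with Supp(a) ⊆ {1,...,h} and wt(a) = s, the codeword c_a = (⟨a,x⟩)_{x ∈ D} has Hamming weight (q-1) q^{k-h-1}(q^h - (q-1)^h) + (-1)^s q^{k-h-1}(q-1)^{h-s+1}; for nonzero a with Supp(a) ⊄ {1,...,h}, the weight is (q-1) q^{k-h-1}(q^h - (q-1)^h). -/
/-!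
A vector `x` with `⟨a, x⟩ ≠ 0` is nonzero, and it lies outside `D` exactly when it lies in the box
`B = (F^*)^H × F^(ι \ H)`; so the weight of `c_a` is the number of `x` with `⟨a, x⟩ ≠ 0` minus the
number of such `x` in `B`. If `a_j ≠ 0` and the `j`-th factor of a box is all of `F`, translating
along `e_j` shows that `⟨a, ·⟩` takes every value equally often on the box. This settles the case
`Supp(a) ⊄ H`. When `Supp(a) ⊆ H`, write the `j`-th factor `F^*` of `B` as `F` minus `{0}`: the
first box is handled by translation, the second has a smaller support, and the resulting
recursion gives `q · #{y ∈ (F^*)^s : Σ a_i y_i = 0} = (q - 1)^s + (-1)^s (q - 1)`.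
-/

open Finset Fintype Function Matrix

variable {ι : Type*} [Fintype ι] [DecidableEq ι]

def nonzeroOn (M : Type*) [Zero M] [Fintype M] [DecidableEq M] (H : Finset ι) : ι → Finset M :=
  fun i => if i ∈ H then univ.erase 0 else univ

theorem prod_card_update_mul {α : Type*} (s : ι → Finset α) (j : ι) (t : Finset α) :
    (∏ i, #(update s j t i)) * #(s j) = #t * ∏ i, #(s i) := by
  rw [← mul_prod_erase univ _ (mem_univ j), ← mul_prod_erase univ (fun i => #(s i)) (mem_univ j),
    update_self, Finset.prod_congr rfl fun i hi => by rw [update_of_ne (ne_of_mem_erase hi)]]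
  ring

section Zero

variable {M : Type*} [Zero M] [Fintype M] [DecidableEq M]

theorem card_filter_piFinset_update_univ (s : ι → Finset M) (j : ι) (p : (ι → M) → Prop)
    [DecidablePred p] :
    #{x ∈ piFinset (update s j univ) | p x} =
      #{x ∈ piFinset (update s j (univ.erase 0)) | p x} +
        #{x ∈ piFinset (update s j {0}) | p x} := by
  have h (t : Finset M) :
      piFinset (update s j t) = {x ∈ piFinset (update s j univ) | x j ∈ t} := by
    simpa using piFinset_update_eq_filter_piFinset_mem (update s j univ) j (t := t) (by simp)
  rw [h (univ.erase 0), h {0}, filter_filter, filter_filter,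
    ← card_filter_add_card_filter_not (p := fun x : ι → M => x j ≠ 0), filter_filter,
    filter_filter]
  simp only [mem_erase, mem_univ, mem_singleton, and_comm, ne_eq, true_and, not_not]

theorem prod_card_nonzeroOn (H : Finset ι) :
    (∏ i, #(nonzeroOn M H i) : ℤ) = (card M - 1) ^ #H * card M ^ #Hᶜ := by
  have hin : ∀ i ∈ H, (#(nonzeroOn M H i) : ℤ) = card M - 1 := fun i hi => by
    simp [nonzeroOn, hi, card_erase_of_mem, Nat.cast_sub card_pos]
  have hout : ∀ i ∈ Hᶜ, (#(nonzeroOn M H i) : ℤ) = card M := fun i hi => by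
    simp [nonzeroOn, mem_compl.1 hi]
  rw [← prod_mul_prod_compl H, prod_congr rfl hin, prod_congr rfl hout, prod_const, prod_const]

end Zero

variable {F : Type*} [Field F] [Fintype F] [DecidableEq F]

theorem card_filter_dotProduct_eq_eq_card_filter_dotProduct_eq_zero {s : ι → Finset F}
    {a : ι → F} {j : ι} (hs : s j = univ) (ha : a j ≠ 0) (c : F) :
    #{x ∈ piFinset s | a ⬝ᵥ x = c} = #{x ∈ piFinset s | a ⬝ᵥ x = 0} := by
  set v : ι → F := Pi.single j (c / a j)
  have hv (x : ι → F) : x + v ∈ piFinset s ↔ x ∈ piFinset s := by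
    simp only [mem_piFinset]
    refine forall_congr' fun i => ?_
    rcases eq_or_ne i j with rfl | hij
    · simp [hs]
    · simp [v, Pi.single_eq_of_ne hij]
  have hav : a ⬝ᵥ v = c := by simp [v, dotProduct_single, mul_div_cancel₀ _ ha]
  refine card_nbij' (· - v) (· + v) (fun x hx => ?_) (fun x hx => ?_) (fun x _ => by simp)
    (fun x _ => by simp)
  · simp only [coe_filter, Set.mem_ofPred_eq] at hx ⊢
    rw [← hv, sub_add_cancel, dotProduct_sub, hx.2, hav, sub_self]
    exact ⟨hx.1, rfl⟩
  · simp only [coe_filter, Set.mem_ofPred_eq] at hx ⊢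
    rw [hv, dotProduct_add, hx.2, hav, zero_add]
    exact ⟨hx.1, rfl⟩

theorem card_mul_card_filter_dotProduct_eq_zero {s : ι → Finset F} {a : ι → F} {j : ι}
    (hs : s j = univ) (ha : a j ≠ 0) :
    card F * #{x ∈ piFinset s | a ⬝ᵥ x = 0} = ∏ i, #(s i) := by
  rw [← card_piFinset, card_eq_sum_card_fiberwise (s := piFinset s) (f := (a ⬝ᵥ ·)) (t := univ)
    (fun _ _ => mem_coe.2 (mem_univ _))]
  simp [card_filter_dotProduct_eq_eq_card_filter_dotProduct_eq_zero hs ha]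

theorem card_filter_dotProduct_eq_zero_of_support_nonzero (S : Finset ι) (s : ι → Finset F)
    (a : ι → F) (hs : ∀ i ∈ S, s i = univ.erase 0) (ha : ∀ i, a i ≠ 0 ↔ i ∈ S) :
    ((card F : ℤ) - 1) ^ #S * card F * #{x ∈ piFinset s | a ⬝ᵥ x = 0} =
      (((card F : ℤ) - 1) ^ #S + (-1) ^ #S * (card F - 1)) * ∏ i, #(s i) := by
  induction S using Finset.induction_on generalizing s a with
  | empty =>
    obtain rfl : a = 0 := funext fun i => by simpa using ha i
    simp
  | insert j S hj ih =>
    have hsj : s j = univ.erase 0 := hs j (mem_insert_self j S)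
    have hsplit := card_filter_piFinset_update_univ s j (fun x => a ⬝ᵥ x = 0)
    rw [← hsj, update_eq_self] at hsplit
    have hpivot := card_mul_card_filter_dotProduct_eq_zero (update_self j univ s)
      ((ha j).2 (mem_insert_self j S))
    have hzero : #{x ∈ piFinset (update s j {0}) | a ⬝ᵥ x = 0} =
        #{x ∈ piFinset (update s j {0}) | update a j 0 ⬝ᵥ x = 0} := by
      refine congrArg card (filter_congr fun x hx => ?_)
      have hxj : x j = 0 := by simpa using mem_piFinset.1 hx j
      refine Iff.of_eq (congrArg (· = 0) (sum_congr rfl fun i _ => ?_))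
      rcases eq_or_ne i j with rfl | hij
      · simp [hxj]
      · rw [update_of_ne hij]
    have ih₀ := ih (update s j {0}) (update a j 0)
      (fun i hi => by rw [update_of_ne (ne_of_mem_of_not_mem hi hj), hs i (mem_insert_of_mem hi)])
      (fun i => by
        rcases eq_or_ne i j with rfl | hij
        · simp [hj]
        · simp [ha i, hij])
    have hprod₁ := prod_card_update_mul s j univ
    have hprod₀ := prod_card_update_mul s j {0}
    have hcard : (#(s j) : ℤ) = card F - 1 := by
      rw [hsj, card_erase_of_mem (mem_univ 0), card_univ, Nat.cast_sub card_pos, Nat.cast_one]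
    rw [card_insert_of_notMem hj]
    rw [← hzero] at ih₀
    push_cast at ih₀
    simp only [card_univ, card_singleton] at hprod₁ hprod₀
    zify at hsplit hpivot hprod₁ hprod₀
    rw [hcard] at hprod₁ hprod₀
    push_cast
    linear_combination -((card F : ℤ) - 1) ^ (#S + 1) * card F * hsplit
      + ((card F : ℤ) - 1) ^ (#S + 1) * hpivot + ((card F : ℤ) - 1) ^ #S * hprod₁
      - ((card F : ℤ) - 1) * ih₀ - (((card F : ℤ) - 1) ^ #S + (-1) ^ #S * (card F - 1)) * hprod₀

theorem mem_piFinset_nonzeroOn {H : Finset ι} {x : ι → F} :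
    x ∈ piFinset (nonzeroOn F H) ↔ ∏ i ∈ H, x i ≠ 0 := by
  rw [mem_piFinset, prod_ne_zero_iff]
  refine forall_congr' fun i => ?_
  by_cases hi : i ∈ H <;> simp [nonzeroOn, hi]

noncomputable def codewordWeight (H : Finset ι) (a : ι → F) : ℕ :=
  {x : ι → F | (x ≠ 0 ∧ ∏ i ∈ H, x i = 0) ∧ a ⬝ᵥ x ≠ 0}.ncard

theorem codewordWeight_add_card_filter_nonzeroOn (H : Finset ι) (a : ι → F) :
    codewordWeight H a + #{x ∈ piFinset (nonzeroOn F H) | a ⬝ᵥ x ≠ 0} =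
      #{x : ι → F | a ⬝ᵥ x ≠ 0} := by
  have hD : codewordWeight H a =
      #(univ.filter (fun x => a ⬝ᵥ x ≠ 0) \ {x ∈ piFinset (nonzeroOn F H) | a ⬝ᵥ x ≠ 0}) := by
    rw [codewordWeight, ← Set.ncard_coe_finset]
    congr 1
    ext x
    simp only [Set.mem_ofPred_eq, coe_sdiff, coe_filter, mem_univ, true_and, Set.mem_sdiff,
      mem_piFinset_nonzeroOn]
    have hx : a ⬝ᵥ x ≠ 0 → x ≠ 0 := by rintro h rfl; simp at h
    tauto
  rw [hD, card_sdiff_add_card_eq_card (filter_subset_filter _ (subset_univ _))]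

theorem card_mul_codewordWeight {H : Finset ι} {a : ι → F} (ha : a ≠ 0) :
    (card F : ℤ) * codewordWeight H a =
      (card F - 1) * card F ^ #H * card F ^ #Hᶜ - card F * ((card F - 1) ^ #H * card F ^ #Hᶜ)
        + card F * #{x ∈ piFinset (nonzeroOn F H) | a ⬝ᵥ x = 0} := by
  obtain ⟨j, hj⟩ : ∃ j, a j ≠ 0 := Function.ne_iff.1 ha
  have hW := codewordWeight_add_card_filter_nonzeroOn H a
  have hbox := card_filter_add_card_filter_not (s := piFinset (nonzeroOn F H))
    (fun x => a ⬝ᵥ x = 0)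
  have hall := card_filter_add_card_filter_not (s := (univ : Finset (ι → F)))
    (fun x => a ⬝ᵥ x = 0)
  have hpivot := card_mul_card_filter_dotProduct_eq_zero (s := fun _ => univ) rfl hj
  rw [piFinset_univ] at hpivot
  rw [card_piFinset] at hbox
  rw [card_univ, card_fun, ← card_add_card_compl H] at hall
  simp only [card_univ, prod_const, ← card_add_card_compl H] at hpivot
  zify at hW hbox hall hpivot
  rw [prod_card_nonzeroOn] at hbox
  simp only [← ne_eq] at hbox hall
  linear_combination (card F : ℤ) * hW - card F * hbox + card F * hall - hpivot

theorem card_mul_codewordWeight_of_notMem {H : Finset ι} {a : ι → F} {j : ι} (hj : a j ≠ 0)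
    (hjH : j ∉ H) :
    (card F : ℤ) * codewordWeight H a =
      (card F - 1) * (card F ^ #H - (card F - 1) ^ #H) * card F ^ #Hᶜ := by
  have hpivot := card_mul_card_filter_dotProduct_eq_zero (s := nonzeroOn F H)
    (by simp [nonzeroOn, hjH]) hj
  zify at hpivot
  rw [prod_card_nonzeroOn] at hpivot
  rw [card_mul_codewordWeight (Function.ne_iff.2 ⟨j, hj⟩)]
  linear_combination hpivot

theorem card_mul_codewordWeight_of_support_subset {H : Finset ι} {a : ι → F} (ha : a ≠ 0)
    (hH : ∀ i, a i ≠ 0 → i ∈ H) :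
    (card F : ℤ) * codewordWeight H a =
      (card F - 1) * (card F ^ #H - (card F - 1) ^ #H) * card F ^ #Hᶜ +
        (-1) ^ #{i | a i ≠ 0} * (card F - 1) ^ (#H - #{i | a i ≠ 0} + 1) * card F ^ #Hᶜ := by
  set S : Finset ι := {i | a i ≠ 0}
  obtain ⟨t, ht⟩ : ∃ t, #H = #S + t :=
    Nat.exists_eq_add_of_le (card_le_card fun i hi => hH i (mem_filter.1 hi).2)
  have hsupp := card_filter_dotProduct_eq_zero_of_support_nonzero S (nonzeroOn F H) a
    (fun i hi => if_pos (hH i (mem_filter.1 hi).2)) (fun i => by simp [S])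
  push_cast at hsupp
  rw [prod_card_nonzeroOn, ht] at hsupp
  have hq : ((card F : ℤ) - 1) ^ #S ≠ 0 :=
    pow_ne_zero _ (sub_ne_zero.2 (by exact_mod_cast Fintype.one_lt_card.ne'))
  have hZ : (card F : ℤ) * #{x ∈ piFinset (nonzeroOn F H) | a ⬝ᵥ x = 0} =
      (((card F : ℤ) - 1) ^ (#S + t) + (-1) ^ #S * (card F - 1) ^ (t + 1)) * card F ^ #Hᶜ :=
    mul_left_cancel₀ hq (by rw [← mul_assoc, hsupp]; ring)
  rw [card_mul_codewordWeight ha, ht, Nat.add_sub_cancel_left]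
  linear_combination hZ

theorem stmt_12_general {F : Type} [Field F] [Fintype F] [DecidableEq F]
    (q h k : ℕ) (hq : Fintype.card F = q) (hk : h ≤ k)
    (a : Fin k → F) (ha : a ≠ 0) :
    ((∀ i : Fin k, a i ≠ 0 → (i : ℕ) < h) →
      (Set.ncard {x : Fin k → F | (x ≠ 0 ∧
          (∏ i ∈ Finset.univ.filter (fun i : Fin k => (i : ℕ) < h), x i) = 0) ∧
          ∑ i, a i * x i ≠ 0} : ℚ) =
        ((q : ℚ) - 1) * (q : ℚ) ^ ((k : ℤ) - h - 1) * ((q : ℚ) ^ h - ((q : ℚ) - 1) ^ h)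
          + (-1) ^ ((Finset.univ.filter (fun i : Fin k => a i ≠ 0)).card)
            * (q : ℚ) ^ ((k : ℤ) - h - 1)
            * ((q : ℚ) - 1) ^ (h - (Finset.univ.filter (fun i : Fin k => a i ≠ 0)).card + 1))
    ∧ (¬ (∀ i : Fin k, a i ≠ 0 → (i : ℕ) < h) →
      (Set.ncard {x : Fin k → F | (x ≠ 0 ∧
          (∏ i ∈ Finset.univ.filter (fun i : Fin k => (i : ℕ) < h), x i) = 0) ∧
          ∑ i, a i * x i ≠ 0} : ℚ) =
        ((q : ℚ) - 1) * (q : ℚ) ^ ((k : ℤ) - h - 1)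
          * ((q : ℚ) ^ h - ((q : ℚ) - 1) ^ h)) := by
  subst hq
  set H : Finset (Fin k) := {i | (i : ℕ) < h}
  have hH : #H = h := by simp [H, Fin.card_filter_val_lt, hk]
  have hpow : (card F : ℚ) ^ ((k : ℤ) - h - 1) = card F ^ #Hᶜ / card F := by
    rw [card_compl, Fintype.card_fin, hH, zpow_sub_one₀ (by positivity), ← Nat.cast_sub hk,
      zpow_natCast, div_eq_mul_inv]
  show (_ → (codewordWeight H a : ℚ) = _) ∧ (_ → (codewordWeight H a : ℚ) = _)
  rw [hpow]
  refine ⟨fun hsupp => ?_, fun hsupp => ?_⟩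
  · have hW := card_mul_codewordWeight_of_support_subset (H := H) ha
      fun i hi => by simpa [H] using hsupp i hi
    rw [hH] at hW
    have hW' := congrArg (Int.cast : ℤ → ℚ) hW
    push_cast at hW'
    field_simp
    linear_combination hW'
  · obtain ⟨j, hj, hjH⟩ := not_forall₂.1 hsupp
    have hW := card_mul_codewordWeight_of_notMem (H := H) hj (by simpa [H] using hjH)
    rw [hH] at hW
    have hW' := congrArg (Int.cast : ℤ → ℚ) hW
    push_cast at hW'
    field_simp
    linear_combination hW'

theorem stmt_12 {F : Type} [Field F] [Fintype F] [DecidableEq F]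
    (q h k : ℕ) (hq : Fintype.card F = q) (hh : 3 ≤ h) (hk : h ≤ k)
    (a : Fin k → F) (ha : a ≠ 0) :
    ((∀ i : Fin k, a i ≠ 0 → (i : ℕ) < h) →
      (Set.ncard {x : Fin k → F | (x ≠ 0 ∧
          (∏ i ∈ Finset.univ.filter (fun i : Fin k => (i : ℕ) < h), x i) = 0) ∧
          ∑ i, a i * x i ≠ 0} : ℚ) =
        ((q : ℚ) - 1) * (q : ℚ) ^ ((k : ℤ) - h - 1) * ((q : ℚ) ^ h - ((q : ℚ) - 1) ^ h)
          + (-1) ^ ((Finset.univ.filter (fun i : Fin k => a i ≠ 0)).card)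
            * (q : ℚ) ^ ((k : ℤ) - h - 1)
            * ((q : ℚ) - 1) ^ (h - (Finset.univ.filter (fun i : Fin k => a i ≠ 0)).card + 1))
    ∧ (¬ (∀ i : Fin k, a i ≠ 0 → (i : ℕ) < h) →
      (Set.ncard {x : Fin k → F | (x ≠ 0 ∧
          (∏ i ∈ Finset.univ.filter (fun i : Fin k => (i : ℕ) < h), x i) = 0) ∧
          ∑ i, a i * x i ≠ 0} : ℚ) =
        ((q : ℚ) - 1) * (q : ℚ) ^ ((k : ℤ) - h - 1)
          * ((q : ℚ) ^ h - ((q : ℚ) - 1) ^ h)) :=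
  stmt_12_general q h k hq hk a ha
end

section
/- Let q be a prime power and h an integer with h ≥ 3. Let w_min = q^{h-1} - (q-1)^{h-1} and w_max = q^{h-1} - (q-2)(q-1)^{h-2}. Then w_min/w_max ≤ (q-1)/q holds if and only if h ≤ 1 + 1/log_2(q/(q-1)), i.e., if and only if 2(q-1)^{h-1} ≥ q^{h-1}. -/
theorem stmt_13 (q h : ℕ) (hq : IsPrimePow q) (hh : 3 ≤ h) :
    let wmin : ℝ := (q : ℝ) ^ (h - 1) - ((q : ℝ) - 1) ^ (h - 1)
    let wmax : ℝ := (q : ℝ) ^ (h - 1) - ((q : ℝ) - 2) * ((q : ℝ) - 1) ^ (h - 2)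
    (wmin / wmax ≤ ((q : ℝ) - 1) / q ↔
        (h : ℝ) ≤ 1 + 1 / Real.logb 2 ((q : ℝ) / ((q : ℝ) - 1))) ∧
    (wmin / wmax ≤ ((q : ℝ) - 1) / q ↔
        2 * ((q : ℝ) - 1) ^ (h - 1) ≥ (q : ℝ) ^ (h - 1)) := by
  intro wmin wmax
  have hq2 : 2 ≤ q := hq.two_le
  have hQ2 : (2:ℝ) ≤ (q:ℝ) := by exact_mod_cast hq2
  obtain ⟨n, rfl⟩ : ∃ n, h = n + 2 := ⟨h - 2, by omega⟩
  have hn1 : 1 ≤ n := by omega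
  set Q : ℝ := (q:ℝ) with hQ
  have e1 : n + 2 - 1 = n + 1 := rfl
  have e2 : n + 2 - 2 = n := rfl
  have hBn : (0:ℝ) < (Q - 1) ^ n := pow_pos (by linarith) n
  have hB : (0:ℝ) < (Q - 1) ^ (n + 1) := pow_pos (by linarith) _
  have hBs : (Q - 1) ^ (n + 1) = (Q - 1) ^ n * (Q - 1) := pow_succ _ _
  have hBA : (Q - 1) ^ (n + 1) ≤ Q ^ (n + 1) :=
    pow_le_pow_left₀ (by linarith) (by linarith) _
  have hwmax : (0:ℝ) < wmax := by
    simp only [wmax, e1, e2]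
    nlinarith
  have core : wmin / wmax ≤ (Q - 1) / Q ↔ Q ^ (n + 1) ≤ 2 * (Q - 1) ^ (n + 1) := by
    rw [div_le_div_iff₀ hwmax (by linarith : (0:ℝ) < Q)]
    simp only [wmin, wmax, e1, e2]
    constructor <;> intro hx <;> nlinarith [pow_succ Q n, pow_pos (show (0:ℝ) < Q by linarith) n]
  have hlogiff : Q ^ (n + 1) ≤ 2 * (Q - 1) ^ (n + 1) ↔
      ((n + 2 : ℕ) : ℝ) ≤ 1 + 1 / Real.logb 2 (Q / (Q - 1)) := by
    rcases eq_or_lt_of_le hQ2 with hQeq | hQgt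
    · constructor <;> intro hx
      · exfalso
        rw [← hQeq] at hx
        have : (2:ℝ) ^ (n + 1) ≤ 2 := by norm_num at hx; linarith
        have h4 : (2:ℝ) ^ 2 ≤ (2:ℝ) ^ (n + 1) := by
          apply pow_le_pow_right₀ (by norm_num) (by omega)
        norm_num at h4
        linarith
      · exfalso
        rw [← hQeq] at hx
        norm_num [Real.logb_self_eq_one] at hx
        have : (3:ℝ) ≤ ((n + 2 : ℕ) : ℝ) := by exact_mod_cast (by omega : 3 ≤ n + 2)
        linarith
    · have hQ1 : (1:ℝ) < Q - 1 := by linarith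
      have hr1 : (1:ℝ) < Q / (Q - 1) := by
        rw [lt_div_iff₀ (by linarith)]; linarith
      have hL : 0 < Real.logb 2 (Q / (Q - 1)) := Real.logb_pos (by norm_num) hr1
      rw [← sub_le_iff_le_add', le_div_iff₀ hL]
      have hcast : ((n + 2 : ℕ) : ℝ) - 1 = ((n + 1 : ℕ) : ℝ) := by push_cast; ring
      rw [hcast, ← Real.logb_pow,
        Real.logb_le_iff_le_rpow (by norm_num) (by positivity),
        Real.rpow_one, div_pow, div_le_iff₀ (by positivity)]
  exact ⟨core.trans hlogiff, core.trans (by rw [ge_iff_le]; exact Iff.rfl)⟩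
end

section
/- Let q be a prime power, k ≥ 2, and let D_1, D_2 ⊆ GF(q)^k both be vectorial cutting blocking sets (for every hyperplane H, D_i ∩ H spans H), with D_1 = a·D_1 for all a ∈ GF(q)^*. Define E ⊆ GF(q)^{k+1} as E = {(x,1) : x ∈ D_1} ∪ {(x,0) : x ∈ D_2}. Then E is a vectorial cutting blocking set in GF(q)^{k+1}: for any pair (a_1,b_1), (a_2,b_2) ∈ GF(q)^k × GF(q) that are linearly independent, there exists (x,y) ∈ E with ⟨a_1,x⟩ + b_1 y ≠ 0 and ⟨a_2,x⟩ + b_2 y = 0. -/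
/-! If `ker ⟨a₂, ·⟩ ⊄ ker ⟨a₁, ·⟩`, the cutting property of `D2` on a hyperplane inside
`ker ⟨a₂, ·⟩` yields a point `(x, 0)`. Otherwise `a₁ = c • a₂`, and independence forces `a₂ ≠ 0`
and `b₁ ≠ c * b₂`. Since `D1` spans the whole space and is closed under nonzero scalars,
`⟨a₂, ·⟩` takes every value on `D1`, in particular `-b₂` at some `x`, and `(x, 1)` works. -/

open Module Submodule LinearMap

def IsCuttingBlockingSet (K : Type*) {V : Type*} [Field K] [AddCommGroup V] [Module K V]
    (D : Set V) : Prop :=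
  ∀ H : Submodule K V, finrank K H = finrank K V - 1 → span K (D ∩ H) = H

section

variable {K V : Type*} [Field K] [AddCommGroup V] [Module K V]

theorem Module.Dual.exists_eq_smul_of_ker_le {f g : Dual K V} (h : ker g ≤ ker f) :
    ∃ c : K, f = c • g := by
  have hmem := mem_span_of_iInf_ker_le_ker (L := fun _ : Unit => g) (by simpa using h)
  rw [Set.range_const] at hmem
  obtain ⟨c, hc⟩ := mem_span_singleton.mp hmem
  exact ⟨c, hc.symm⟩

variable [FiniteDimensional K V]

theorem Module.Dual.finrank_ker_of_ne_zero {f : Dual K V} (hf : f ≠ 0) :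
    finrank K (ker f) = finrank K V - 1 := by
  have := f.finrank_ker_add_one_of_ne_zero hf
  omega

theorem exists_hyperplane_le_ker_not_le_ker (hV : 2 ≤ finrank K V) {f g : Dual K V}
    (h : ¬ ker g ≤ ker f) :
    ∃ H : Submodule K V, finrank K H = finrank K V - 1 ∧ H ≤ ker g ∧ ¬ H ≤ ker f := by
  by_cases hg : g = 0
  · -- any hyperplane through a vector outside `ker f` will do
    obtain ⟨w, -, hwf⟩ := SetLike.not_le_iff_exists.mp h
    have hw0 : w ≠ 0 := fun h => hwf (h ▸ zero_mem _)
    have hw : (K ∙ w) < ⊤ := by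
      refine lt_top_of_finrank_lt_finrank ?_
      rw [finrank_span_singleton hw0]
      omega
    obtain ⟨ψ, hψ, hwψ⟩ := (K ∙ w).exists_le_ker_of_lt_top hw
    exact ⟨ker ψ, Dual.finrank_ker_of_ne_zero hψ, by simp [hg],
      fun hle => hwf (hle (hwψ (mem_span_singleton_self w)))⟩
  · exact ⟨ker g, g.finrank_ker_of_ne_zero hg, le_rfl, h⟩

namespace IsCuttingBlockingSet

variable {D : Set V} (hD : IsCuttingBlockingSet K D) (hV : 2 ≤ finrank K V)
include hD hV

theorem exists_mem_ker_apply_ne_zero {f g : Dual K V} (h : ¬ ker g ≤ ker f) :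
    ∃ x ∈ D, g x = 0 ∧ f x ≠ 0 := by
  obtain ⟨H, hH, hHg, hHf⟩ := exists_hyperplane_le_ker_not_le_ker hV h
  by_contra! hcon
  apply hHf
  rw [← hD H hH]
  exact span_le.mpr fun x hx => hcon x hx.1 (hHg hx.2)

theorem exists_mem_ker {f : Dual K V} (hf : f ≠ 0) : ∃ x ∈ D, f x = 0 := by
  have hne : ker f ≠ ⊥ := fun hbot => by
    have := f.finrank_ker_of_ne_zero hf
    rw [hbot, finrank_bot] at this
    omega
  rw [← hD _ (f.finrank_ker_of_ne_zero hf)] at hne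
  obtain ⟨x, hxD, hx⟩ : (D ∩ ker f).Nonempty :=
    Set.nonempty_iff_ne_empty.mpr fun he => hne (by rw [he, span_empty])
  exact ⟨x, hxD, hx⟩

theorem exists_mem_apply_eq (hsmul : ∀ a : K, a ≠ 0 → ∀ x ∈ D, a • x ∈ D) {f : Dual K V}
    (hf : f ≠ 0) (t : K) : ∃ x ∈ D, f x = t := by
  rcases eq_or_ne t 0 with rfl | ht
  · exact hD.exists_mem_ker hV hf
  · obtain ⟨x, hxD, -, hx⟩ :=
      hD.exists_mem_ker_apply_ne_zero hV (g := 0) (f := f) (by simpa [ker_zero] using hf)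
    exact ⟨(t / f x) • x, hsmul _ (div_ne_zero ht hx) x hxD, by simp [hx]⟩

end IsCuttingBlockingSet

end

theorem LinearIndependent.ne_zero_and_ne_mul_of_fst_eq_smul {K M : Type*} [Field K]
    [AddCommGroup M] [Module K M] {a₁ a₂ : M} {b₁ b₂ c : K}
    (hind : LinearIndependent K ![(a₁, b₁), (a₂, b₂)]) (ha : a₁ = c • a₂) :
    a₂ ≠ 0 ∧ b₁ ≠ c * b₂ := by
  subst ha
  have hpair := LinearIndependent.pair_iff.mp hind
  have hb : b₁ ≠ c * b₂ := fun hb =>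
    one_ne_zero (hpair 1 (-c) (by simp [Prod.ext_iff, hb])).1
  refine ⟨fun ha₂ => hb ?_, hb⟩
  obtain ⟨rfl, hb₁⟩ := hpair b₂ (-b₁) (by simp [ha₂, Prod.ext_iff, mul_comm])
  simpa using hb₁

theorem stmt_15_general {F : Type} [Field F]
    (k : ℕ) (hk : 2 ≤ k)
    (D1 D2 : Set (Fin k → F))
    (h1 : ∀ H : Submodule F (Fin k → F), Module.finrank F H = k - 1 →
      Submodule.span F (D1 ∩ (H : Set (Fin k → F))) = H)
    (h2 : ∀ H : Submodule F (Fin k → F), Module.finrank F H = k - 1 →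
      Submodule.span F (D2 ∩ (H : Set (Fin k → F))) = H)
    (hscal : ∀ a : F, a ≠ 0 → (fun x => a • x) '' D1 = D1)
    (a₁ a₂ : Fin k → F) (b₁ b₂ : F)
    (hind : LinearIndependent F ![((a₁, b₁) : (Fin k → F) × F), (a₂, b₂)]) :
    ∃ p : (Fin k → F) × F,
      ((p.2 = 1 ∧ p.1 ∈ D1) ∨ (p.2 = 0 ∧ p.1 ∈ D2)) ∧
      (∑ i, a₁ i * p.1 i) + b₁ * p.2 ≠ 0 ∧ (∑ i, a₂ i * p.1 i) + b₂ * p.2 = 0 := by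
  let φ := dotProductEquiv F (Fin k)
  have hφ : ∀ a x : Fin k → F, ∑ i, a i * x i = φ a x := fun _ _ => rfl
  simp only [hφ]
  have hV : 2 ≤ finrank F (Fin k → F) := by simpa using hk
  have hD1 : IsCuttingBlockingSet F D1 := by simpa [IsCuttingBlockingSet] using h1
  have hD2 : IsCuttingBlockingSet F D2 := by simpa [IsCuttingBlockingSet] using h2
  by_cases hker : ker (φ a₂) ≤ ker (φ a₁)
  · obtain ⟨c, hc⟩ := Dual.exists_eq_smul_of_ker_le hker
    have ha : a₁ = c • a₂ := φ.injective (by rw [map_smul, hc])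
    obtain ⟨ha₂, hb⟩ := hind.ne_zero_and_ne_mul_of_fst_eq_smul ha
    have hsmul : ∀ a : F, a ≠ 0 → ∀ x ∈ D1, a • x ∈ D1 := fun a ha x hx =>
      hscal a ha ▸ Set.mem_image_of_mem _ hx
    obtain ⟨x, hxD, hx⟩ :=
      hD1.exists_mem_apply_eq hV hsmul ((map_ne_zero_iff φ φ.injective).mpr ha₂) (-b₂)
    refine ⟨(x, 1), Or.inl ⟨rfl, hxD⟩, ?_, by simp [hx]⟩
    rw [hc, LinearMap.smul_apply, hx]
    exact fun h => hb (by linear_combination h)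
  · obtain ⟨x, hxD, hx₂, hx₁⟩ := hD2.exists_mem_ker_apply_ne_zero hV hker
    exact ⟨(x, 0), Or.inr ⟨rfl, hxD⟩, by simpa using hx₁, by simpa using hx₂⟩

theorem stmt_15 {F : Type} [Field F] [Fintype F] [DecidableEq F]
    (q k : ℕ) (hq : Fintype.card F = q) (hk : 2 ≤ k)
    (D1 D2 : Set (Fin k → F))
    (h1 : ∀ H : Submodule F (Fin k → F), Module.finrank F H = k - 1 →
      Submodule.span F (D1 ∩ (H : Set (Fin k → F))) = H)
    (h2 : ∀ H : Submodule F (Fin k → F), Module.finrank F H = k - 1 →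
      Submodule.span F (D2 ∩ (H : Set (Fin k → F))) = H)
    (hscal : ∀ a : F, a ≠ 0 → (fun x => a • x) '' D1 = D1)
    (a₁ a₂ : Fin k → F) (b₁ b₂ : F)
    (hind : LinearIndependent F ![((a₁, b₁) : (Fin k → F) × F), (a₂, b₂)]) :
    ∃ p : (Fin k → F) × F,
      ((p.2 = 1 ∧ p.1 ∈ D1) ∨ (p.2 = 0 ∧ p.1 ∈ D2)) ∧
      (∑ i, a₁ i * p.1 i) + b₁ * p.2 ≠ 0 ∧ (∑ i, a₂ i * p.1 i) + b₂ * p.2 = 0 :=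
  stmt_15_general k hk D1 D2 h1 h2 hscal a₁ a₂ b₁ b₂ hind
end

section
/- Let q be a prime power, k ≥ 2, and D ⊆ GF(q)^k a vectorial cutting blocking set (for every hyperplane H, the span of D ∩ H equals H). Then for any two linearly independent vectors a_1, a_2 ∈ GF(q)^k, there exists x ∈ D with ⟨a_1,x⟩ ≠ 0 and ⟨a_2,x⟩ ≠ 0. -/
noncomputable def myform {F : Type} [Field F] {k : ℕ} (a : Fin k → F) :
    (Fin k → F) →ₗ[F] F :=
  ∑ i, a i • LinearMap.proj i

theorem myform_apply {F : Type} [Field F] {k : ℕ} (a x : Fin k → F) :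
    myform a x = ∑ i, a i * x i := by
  simp [myform, smul_eq_mul]

theorem stmt_16 {F : Type} [Field F] [Fintype F] [DecidableEq F]
    (q k : ℕ) (hq : Fintype.card F = q) (hk : 2 ≤ k)
    (D : Set (Fin k → F))
    (hcut : ∀ H : Submodule F (Fin k → F), Module.finrank F H = k - 1 →
      Submodule.span F (D ∩ (H : Set (Fin k → F))) = H)
    (a₁ a₂ : Fin k → F) (hind : LinearIndependent F ![a₁, a₂]) :
    ∃ x ∈ D, (∑ i, a₁ i * x i) ≠ 0 ∧ (∑ i, a₂ i * x i) ≠ 0 := by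
  by_contra hcon
  push_neg at hcon
  rw [LinearIndependent.pair_iff] at hind
  -- the linear form f = ⟨a₁+a₂, ·⟩
  set f : (Fin k → F) →ₗ[F] F := myform (a₁ + a₂) with hf
  have hfapp : ∀ x, f x = (∑ i, a₁ i * x i) + (∑ i, a₂ i * x i) := by
    intro x
    rw [hf, myform_apply]
    rw [← Finset.sum_add_distrib]
    exact Finset.sum_congr rfl (fun i _ => by simp [add_mul])
  -- f is not zero
  have hsum_ne : a₁ + a₂ ≠ 0 := by
    intro h
    have := (hind 1 1 (by simpa using h)).1
    exact one_ne_zero this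
  obtain ⟨j, hj⟩ := Function.ne_iff.mp hsum_ne
  have hv : f (Pi.single j 1) ≠ 0 := by
    rw [hf, myform_apply]
    simpa [Pi.single_apply, Finset.sum_ite_eq'] using hj
  set v : Fin k → F := Pi.single j 1 with hvdef
  -- f is surjective
  have hsurj : Function.Surjective f := by
    intro c
    refine ⟨(c / f v) • v, ?_⟩
    rw [map_smul, smul_eq_mul, div_mul_cancel₀ _ hv]
  -- finrank of the kernel is k - 1
  have hrank : Module.finrank F (LinearMap.ker f) = k - 1 := by
    have h1 := LinearMap.finrank_range_add_finrank_ker f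
    rw [LinearMap.range_eq_top.mpr hsurj, finrank_top, Module.finrank_self,
      Module.finrank_pi] at h1
    simp at h1
    omega
  have hspan := hcut (LinearMap.ker f) hrank
  -- D ∩ ker f is contained in ker ⟨a₁,·⟩ and ker ⟨a₂,·⟩
  have hsub : D ∩ (LinearMap.ker f : Set (Fin k → F)) ⊆
      (LinearMap.ker (myform a₁) : Set (Fin k → F)) ⊓
      (LinearMap.ker (myform a₂) : Set (Fin k → F)) := by
    rintro x ⟨hxD, hxK⟩
    have hfx : (∑ i, a₁ i * x i) + (∑ i, a₂ i * x i) = 0 := by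
      rw [← hfapp]; exact hxK
    have h2 : (∑ i, a₂ i * x i) = 0 := by
      by_cases h1 : (∑ i, a₁ i * x i) = 0
      · simpa [h1] using hfx
      · exact hcon x hxD h1
    have h1 : (∑ i, a₁ i * x i) = 0 := by simpa [h2] using hfx
    exact ⟨by simpa [myform_apply] using h1, by simpa [myform_apply] using h2⟩
  have hle : LinearMap.ker f ≤ LinearMap.ker (myform a₁) ⊓ LinearMap.ker (myform a₂) := by
    rw [← hspan]
    exact Submodule.span_le.mpr hsub
  -- every x with f x = 0 is killed by both forms
  have hker : ∀ x, f x = 0 → myform a₁ x = 0 ∧ myform a₂ x = 0 := by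
    intro x hx
    have := hle (LinearMap.mem_ker.mpr hx)
    exact ⟨(Submodule.mem_inf.mp this).1, (Submodule.mem_inf.mp this).2⟩
  -- deduce a₁ and a₂ are multiples of a₁+a₂
  have hmul : ∀ i, a₁ i = (a₁ i + a₂ i) * (myform a₁ v / f v) ∧
      a₂ i = (a₁ i + a₂ i) * (myform a₂ v / f v) := by
    intro i
    set w : Fin k → F := Pi.single i 1 - (f (Pi.single i 1) / f v) • v with hw
    have hfw : f w = 0 := by
      rw [hw, map_sub, map_smul, smul_eq_mul, div_mul_cancel₀ _ hv, sub_self]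
    obtain ⟨h1, h2⟩ := hker w hfw
    have e1 : ∀ (a : Fin k → F), myform a (Pi.single i 1) = a i := by
      intro a
      rw [myform_apply]
      simp [Pi.single_apply, Finset.sum_ite_eq']
    have efi : f (Pi.single i 1) = a₁ i + a₂ i := by
      rw [hf, e1]; rfl
    rw [hw, map_sub, map_smul, smul_eq_mul, e1, sub_eq_zero, efi] at h1 h2
    constructor
    · linear_combination h1
    · linear_combination h2
  have hcomb : (myform a₂ v / f v) • a₁ + (-(myform a₁ v / f v)) • a₂ = 0 := by
    funext i
    obtain ⟨h1, h2⟩ := hmul i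
    simp only [Pi.add_apply, Pi.smul_apply, smul_eq_mul, Pi.zero_apply]
    linear_combination (myform a₂ v / f v) * h1 - (myform a₁ v / f v) * h2
  obtain ⟨hc2z, hc1z⟩ := hind _ _ hcomb
  have hc1z' : myform a₁ v / f v = 0 := by
    have := hc1z; simpa using this
  have ha1 : a₁ = 0 := by
    funext i
    rw [(hmul i).1, hc1z', mul_zero]; rfl
  have := (hind 1 0 (by simp [ha1])).1
  exact one_ne_zero this
end
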